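/- Fix ξ ∈ ℝ, let α = ξ and ν = ξ², and let u be a normalized (α,ξ,ν)-eigenfunction. Then ∫₀^∞ (C_{ξ,2} u)(t) u(t) dt = 3/4 − (11/4)ξ² + (19/8)ξ⁴ + ( (15/16)ξ − (19/16)ξ³ ) u(0)². -/

import Mathlib

/-!
Since `n₀u = ξ²u`, i.e. `u'' = (t² − 2ξt + 1)u`, the integrand `(C_{ξ,2}u)u` equals
`(3/4 − 11/4 ξ² + 19/8 ξ⁴)u²` plus the derivative of a quadratic form `p u² + q uu' + r u'²` with
polynomial weights. Rapid decay kills that form at infinity, the normalisation evaluates the first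
part, and at `0` the Robin condition `u'(0) = 0` leaves only `−p(0)u(0)²`.
-/

open MeasureTheory

def IsEigen (α ξ ν : ℝ) (u : ℝ → ℝ) : Prop :=
  ContDiff ℝ (⊤ : ℕ∞) u ∧
  (∀ n k : ℕ, ∃ C : ℝ, ∀ t : ℝ, 0 ≤ t → |t| ^ k * |iteratedDeriv n u t| ≤ C) ∧
  (∀ t : ℝ, 0 ≤ t → -(deriv (deriv u) t) + ((ξ - t) ^ 2 + 1) * u t = ν * u t) ∧
  deriv u 0 = (α - ξ) * u 0

/-- `(n₀w)(t) = −w''(t) + ((ξ−t)² + 1)w(t)` is the factor multiplying `2t²`. -/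
noncomputable def Cxi2 (ξ : ℝ) (w : ℝ → ℝ) (t : ℝ) : ℝ :=
  -4 * t * (deriv w t + (ξ - t) * w t)
    + 2 * t ^ 2 * (-(deriv (deriv w) t) + ((ξ - t) ^ 2 + 1) * w t)
    + 8 / 3 * (ξ - t) * t ^ 3 * w t - 4 * t ^ 2 * w t + t ^ 4 * w t

open Filter Set Polynomial Topology

def RapidDecay (f : ℝ → ℝ) : Prop :=
  ∀ k : ℕ, ∃ C : ℝ, ∀ t : ℝ, 0 ≤ t → |t| ^ k * |f t| ≤ C

namespace RapidDecay

variable {f g : ℝ → ℝ}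

lemma add (hf : RapidDecay f) (hg : RapidDecay g) : RapidDecay (fun t => f t + g t) := by
  intro k
  obtain ⟨C, hC⟩ := hf k
  obtain ⟨D, hD⟩ := hg k
  refine ⟨C + D, fun t ht => ?_⟩
  calc |t| ^ k * |f t + g t| ≤ |t| ^ k * |f t| + |t| ^ k * |g t| := by
        rw [← mul_add]; gcongr; exact abs_add_le _ _
    _ ≤ C + D := add_le_add (hC t ht) (hD t ht)

lemma const_mul (a : ℝ) (hf : RapidDecay f) : RapidDecay (fun t => a * f t) := by
  intro k
  obtain ⟨C, hC⟩ := hf k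
  refine ⟨|a| * C, fun t ht => ?_⟩
  rw [abs_mul, mul_left_comm]
  exact mul_le_mul_of_nonneg_left (hC t ht) (abs_nonneg a)

lemma pow_mul (n : ℕ) (hf : RapidDecay f) : RapidDecay (fun t => t ^ n * f t) := by
  intro k
  obtain ⟨C, hC⟩ := hf (k + n)
  exact ⟨C, fun t ht => by rw [abs_mul, abs_pow, ← mul_assoc, ← pow_add]; exact hC t ht⟩

lemma polynomial_eval_mul (p : ℝ[X]) (hf : RapidDecay f) :
    RapidDecay (fun t => p.eval t * f t) := by
  induction p using Polynomial.induction_on' with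
  | add p q hp hq => simpa only [eval_add, add_mul] using hp.add hq
  | monomial n a => simpa only [eval_monomial, mul_assoc] using (hf.pow_mul n).const_mul a

lemma mul (hf : RapidDecay f) (hg : RapidDecay g) : RapidDecay (fun t => f t * g t) := by
  obtain ⟨D, hD⟩ := hg 0
  intro k
  obtain ⟨C, hC⟩ := hf k
  refine ⟨C * D, fun t ht => ?_⟩
  have hg_le : |g t| ≤ D := by simpa using hD t ht
  rw [abs_mul, ← mul_assoc]
  exact mul_le_mul (hC t ht) hg_le (abs_nonneg _) (le_trans (by positivity) (hC t ht))

lemma tendsto_atTop_zero (hf : RapidDecay f) : Tendsto f atTop (𝓝 0) := by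
  obtain ⟨C, hC⟩ := hf 1
  refine squeeze_zero_norm' (a := fun t => C / t) ?_ (tendsto_const_nhds.div_atTop tendsto_id)
  filter_upwards [eventually_gt_atTop 0] with t ht
  rw [Real.norm_eq_abs, le_div_iff₀ ht]
  simpa [abs_of_pos ht, mul_comm] using hC t ht.le

lemma integrableOn_Ioi (hc : Continuous f) (hf : RapidDecay f) : IntegrableOn f (Ioi 0) := by
  obtain ⟨C, hC⟩ := hf 0
  obtain ⟨D, hD⟩ := hf 2
  refine (integrable_inv_one_add_sq.integrableOn.const_mul (C + D)).mono'
    hc.aestronglyMeasurable.restrict ?_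
  filter_upwards [ae_restrict_mem measurableSet_Ioi] with t ht
  have h0 := hC t (le_of_lt ht)
  have h2 := hD t (le_of_lt ht)
  rw [pow_zero, one_mul] at h0
  rw [sq_abs] at h2
  rw [Real.norm_eq_abs, ← div_eq_mul_inv, le_div_iff₀ (by positivity)]
  linarith

end RapidDecay

section QuadForm

variable (p q r : ℝ[X]) (u : ℝ → ℝ)

noncomputable def quadForm (t : ℝ) : ℝ :=
  p.eval t * u t ^ 2 + q.eval t * (u t * deriv u t) + r.eval t * deriv u t ^ 2

noncomputable def quadFormDeriv (t : ℝ) : ℝ :=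
  p.derivative.eval t * u t ^ 2 + (2 * p + q.derivative).eval t * (u t * deriv u t)
    + (q + r.derivative).eval t * deriv u t ^ 2
    + q.eval t * (u t * deriv (deriv u) t) + (2 * r).eval t * (deriv u t * deriv (deriv u) t)

variable {p q r u}

lemma hasDerivAt_quadForm (hu : ContDiff ℝ 2 u) (t : ℝ) :
    HasDerivAt (quadForm p q r u) (quadFormDeriv p q r u t) t := by
  have hu' : HasDerivAt u (deriv u t) t :=
    (hu.differentiable two_ne_zero t).hasDerivAt
  have hu'' : HasDerivAt (deriv u) (deriv (deriv u) t) t :=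
    ((contDiff_succ_iff_deriv.1 hu).2.2.differentiable one_ne_zero t).hasDerivAt
  refine ((((p.hasDerivAt t).mul (hu'.pow 2)).add ((q.hasDerivAt t).mul (hu'.mul hu''))).add
    ((r.hasDerivAt t).mul (hu''.pow 2))).congr_deriv ?_
  simp only [quadFormDeriv, eval_add, eval_mul, eval_ofNat, Pi.mul_apply, Pi.pow_apply]
  ring

lemma continuous_quadFormDeriv (hu : ContDiff ℝ 2 u) : Continuous (quadFormDeriv p q r u) := by
  have h1 : ContDiff ℝ 1 (deriv u) := (contDiff_succ_iff_deriv.1 hu).2.2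
  have := hu.continuous
  have := h1.continuous
  have := h1.continuous_deriv le_rfl
  unfold quadFormDeriv
  fun_prop

lemma RapidDecay.quadForm (h0 : RapidDecay u) (h1 : RapidDecay (deriv u)) :
    RapidDecay (quadForm p q r u) := by
  unfold _root_.quadForm
  simp only [sq]
  exact (((h0.mul h0).polynomial_eval_mul p).add ((h0.mul h1).polynomial_eval_mul q)).add
    ((h1.mul h1).polynomial_eval_mul r)

lemma RapidDecay.quadFormDeriv (h0 : RapidDecay u) (h1 : RapidDecay (deriv u))
    (h2 : RapidDecay (deriv (deriv u))) : RapidDecay (quadFormDeriv p q r u) := by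
  unfold _root_.quadFormDeriv
  simp only [sq]
  exact (((((h0.mul h0).polynomial_eval_mul _).add ((h0.mul h1).polynomial_eval_mul _)).add
    ((h1.mul h1).polynomial_eval_mul _)).add ((h0.mul h2).polynomial_eval_mul _)).add
    ((h1.mul h2).polynomial_eval_mul _)

lemma integrableOn_Ioi_quadFormDeriv (hu : ContDiff ℝ 2 u) (h0 : RapidDecay u)
    (h1 : RapidDecay (deriv u)) (h2 : RapidDecay (deriv (deriv u))) :
    IntegrableOn (quadFormDeriv p q r u) (Ioi 0) :=
  (h0.quadFormDeriv h1 h2).integrableOn_Ioi (continuous_quadFormDeriv hu)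

theorem integral_Ioi_quadFormDeriv (hu : ContDiff ℝ 2 u) (h0 : RapidDecay u)
    (h1 : RapidDecay (deriv u)) (h2 : RapidDecay (deriv (deriv u))) :
    ∫ t in Ioi 0, quadFormDeriv p q r u t = -quadForm p q r u 0 := by
  have hF : Continuous (quadForm p q r u) := by
    have := hu.continuous
    have := hu.continuous_deriv (by norm_num)
    unfold _root_.quadForm
    fun_prop
  rw [integral_Ioi_of_hasDerivAt_of_tendsto hF.continuousWithinAt
    (fun t _ => hasDerivAt_quadForm hu t)
    (integrableOn_Ioi_quadFormDeriv hu h0 h1 h2) (h0.quadForm h1).tendsto_atTop_zero, zero_sub]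

end QuadForm

namespace Cxi2

/- The weights of the quadratic form whose derivative is `(C_{ξ,2}u)u − (3/4 − 11/4 ξ² + 19/8 ξ⁴)u²`
for an eigenfunction; they are found by matching coefficients of `tᵏu²`, `tᵏuu'`, `tᵏu'²`. -/

noncomputable def weightSq (ξ : ℝ) : ℝ[X] :=
  C (-15 / 16 * ξ + 19 / 16 * ξ ^ 3) + C (-17 / 16 + 113 / 48 * ξ ^ 2 - 19 / 8 * ξ ^ 4) * X
    + C (-79 / 48 * ξ + 19 / 48 * ξ ^ 3) * X ^ 2 + C (5 / 48 + 23 / 48 * ξ ^ 2) * X ^ 3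
    + C (3 / 8 * ξ) * X ^ 4 - C (5 / 24) * X ^ 5

noncomputable def weightMix (ξ : ℝ) : ℝ[X] :=
  C (5 / 16 + 19 / 48 * ξ ^ 2) - C (ξ / 12) * X - C (5 / 8) * X ^ 2

noncomputable def weightDerivSq (ξ : ℝ) : ℝ[X] :=
  C (47 / 48 * ξ - 19 / 16 * ξ ^ 3) - C (5 / 16 + 19 / 48 * ξ ^ 2) * X + C (ξ / 24) * X ^ 2
    + C (5 / 24) * X ^ 3

end Cxi2

open Cxi2 in
lemma Cxi2_mul_self_eq {ξ t : ℝ} {u : ℝ → ℝ}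
    (hode : -(deriv (deriv u) t) + ((ξ - t) ^ 2 + 1) * u t = ξ ^ 2 * u t) :
    Cxi2 ξ u t * u t = (3 / 4 - 11 / 4 * ξ ^ 2 + 19 / 8 * ξ ^ 4) * u t ^ 2
      + quadFormDeriv (weightSq ξ) (weightMix ξ) (weightDerivSq ξ) u t := by
  have hu'' : deriv (deriv u) t = (t ^ 2 - 2 * ξ * t + 1) * u t := by linear_combination -hode
  simp only [Cxi2, quadFormDeriv, weightSq, weightMix, weightDerivSq, hu'', eval_add, eval_sub,
    eval_mul, eval_C, eval_X, eval_pow, eval_ofNat, eval_zero, eval_one, derivative_add,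
    derivative_sub, derivative_mul, derivative_C, derivative_X, derivative_X_pow]
  ring

theorem Cxi2_expectation
    (ξ : ℝ) (u : ℝ → ℝ) (hu : IsEigen ξ ξ (ξ ^ 2) u)
    (hnorm : ∫ t in Set.Ioi (0 : ℝ), u t ^ 2 = 1) :
    ∫ t in Set.Ioi (0 : ℝ), Cxi2 ξ u t * u t
      = 3 / 4 - 11 / 4 * ξ ^ 2 + 19 / 8 * ξ ^ 4
        + (15 / 16 * ξ - 19 / 16 * ξ ^ 3) * u 0 ^ 2 := by
  obtain ⟨hsmooth, hdecay, hode, hrobin⟩ := hu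
  have hu2 : ContDiff ℝ 2 u := hsmooth.of_le (WithTop.coe_le_coe.2 le_top)
  have hd : ∀ n, RapidDecay (iteratedDeriv n u) := hdecay
  have h0 : RapidDecay u := by simpa only [iteratedDeriv_zero] using hd 0
  have h1 : RapidDecay (deriv u) := by simpa only [iteratedDeriv_one] using hd 1
  have h2 : RapidDecay (deriv (deriv u)) := by
    simpa only [iteratedDeriv_succ, iteratedDeriv_zero] using hd 2
  have hsq : IntegrableOn (fun t => u t ^ 2) (Ioi 0) := by
    simpa only [sq] using (h0.mul h0).integrableOn_Ioi (by fun_prop)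
  rw [setIntegral_congr_fun measurableSet_Ioi fun t ht => Cxi2_mul_self_eq (hode t (le_of_lt ht)),
    integral_add (hsq.const_mul _) (integrableOn_Ioi_quadFormDeriv hu2 h0 h1 h2), integral_const_mul,
    hnorm, integral_Ioi_quadFormDeriv hu2 h0 h1 h2]
  simp only [quadForm, Cxi2.weightSq, hrobin, sub_self, zero_mul, eval_add, eval_sub, eval_mul,
    eval_C, eval_pow, eval_X]
  ring
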